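/- Let 0 < γ, and for h ∈ [0,1] set K(h) = (σ²/(2γ)) · (e^{−γh} + e^{−γ(1−h)})/(1 − e^{−γ}). Then for s ≤ t and x ∈ [0,1] with x ∉ (s,t) (and all of s,t,x in [0,1]): (1/2)K(|s−x|) − K(|(s+t)/2 − x|) + (1/2)K(|t−x|) = 2 sinh²(γ(t−s)/4) · K(|(s+t)/2 − x|). -/

import Mathlib

/-!
The kernel is a fixed multiple of `e^{-γh} + e^{γh-γ}`, and for every exponential the second
central difference with step `d` is `cosh (a d) - 1 = 2 sinh² (a d / 2)` times its value. Since
`sinh²` is even, both exponentials give the same factor. When `x ∉ (s, t)`, the distances from `x`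
to `s` and `t` are the distance to the midpoint minus and plus the half-length `(t - s) / 2`.
-/

open Real

/-- Covariance kernel of the cyclically stationary Ornstein–Uhlenbeck process. -/
noncomputable def ouKernel (γ σ : ℝ) (h : ℝ) : ℝ :=
  σ ^ 2 / (2 * γ) * (Real.exp (-γ * h) + Real.exp (-γ * (1 - h))) / (1 - Real.exp (-γ))

theorem exp_second_central_difference (a m d : ℝ) :
    (1 / 2) * exp (a * (m - d)) - exp (a * m) + (1 / 2) * exp (a * (m + d)) =
      2 * sinh (a * d / 2) ^ 2 * exp (a * m) := by
  have hminus : exp (a * (m - d)) = exp (a * m) * exp (-(a * d / 2)) ^ 2 := by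
    rw [← exp_nat_mul, ← exp_add]; ring_nf
  have hplus : exp (a * (m + d)) = exp (a * m) * exp (a * d / 2) ^ 2 := by
    rw [← exp_nat_mul, ← exp_add]; ring_nf
  rw [hminus, hplus, sinh_eq, exp_neg]
  field_simp
  ring

theorem ouKernel_eq (γ σ h : ℝ) :
    ouKernel γ σ h =
      σ ^ 2 / (2 * γ) / (1 - exp (-γ)) * (exp (-γ * h) + exp (-γ) * exp (γ * h)) := by
  rw [ouKernel, ← exp_add, mul_div_right_comm]
  ring_nf

theorem ouKernel_second_central_difference (γ σ m d : ℝ) :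
    (1 / 2) * ouKernel γ σ (m - d) - ouKernel γ σ m + (1 / 2) * ouKernel γ σ (m + d) =
      2 * sinh (γ * d / 2) ^ 2 * ouKernel γ σ m := by
  have hdecay := exp_second_central_difference (-γ) m d
  have hgrowth := exp_second_central_difference γ m d
  rw [show -γ * d / 2 = -(γ * d / 2) by ring, sinh_neg, neg_sq] at hdecay
  simp only [ouKernel_eq]
  linear_combination σ ^ 2 / (2 * γ) / (1 - exp (-γ)) * (hdecay + exp (-γ) * hgrowth)

theorem abs_sub_endpoints_of_notMem_Ioo {s t x : ℝ} (hst : s ≤ t) (hx : x ∉ Set.Ioo s t) :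
    (|s - x| = |(s + t) / 2 - x| - (t - s) / 2 ∧ |t - x| = |(s + t) / 2 - x| + (t - s) / 2) ∨
      (|s - x| = |(s + t) / 2 - x| + (t - s) / 2 ∧ |t - x| = |(s + t) / 2 - x| - (t - s) / 2) := by
  rcases le_or_gt x s with hxs | hsx
  · left
    rw [abs_of_nonneg (by linarith : 0 ≤ s - x), abs_of_nonneg (by linarith : 0 ≤ t - x),
      abs_of_nonneg (by linarith : 0 ≤ (s + t) / 2 - x)]
    constructor <;> ring
  · have htx : t ≤ x := not_lt.mp fun hxt => hx ⟨hsx, hxt⟩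
    right
    rw [abs_of_neg (by linarith : s - x < 0), abs_of_nonpos (by linarith : t - x ≤ 0),
      abs_of_nonpos (by linarith : (s + t) / 2 - x ≤ 0)]
    constructor <;> ring

theorem ou_kernel_second_difference_general (γ σ s t x : ℝ)
    (hst : s ≤ t) (hx' : x ∉ Set.Ioo s t) :
    (1 / 2) * ouKernel γ σ |s - x| - ouKernel γ σ |(s + t) / 2 - x| +
        (1 / 2) * ouKernel γ σ |t - x| =
      2 * Real.sinh (γ * (t - s) / 4) ^ 2 * ouKernel γ σ |(s + t) / 2 - x| := by
  have key := ouKernel_second_central_difference γ σ |(s + t) / 2 - x| ((t - s) / 2)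
  rw [show γ * ((t - s) / 2) / 2 = γ * (t - s) / 4 by ring] at key
  rcases abs_sub_endpoints_of_notMem_Ioo hst hx' with ⟨hs, ht⟩ | ⟨hs, ht⟩
  · rw [hs, ht, key]
  · rw [hs, ht, ← key]
    ring

theorem ou_kernel_second_difference (γ σ s t x : ℝ) (hγ : 0 < γ) (hσ : 0 < σ)
    (hst : s ≤ t) (hs : s ∈ Set.Icc (0 : ℝ) 1) (ht : t ∈ Set.Icc (0 : ℝ) 1)
    (hx : x ∈ Set.Icc (0 : ℝ) 1) (hx' : x ∉ Set.Ioo s t) :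
    (1 / 2) * ouKernel γ σ |s - x| - ouKernel γ σ |(s + t) / 2 - x| +
        (1 / 2) * ouKernel γ σ |t - x| =
      2 * Real.sinh (γ * (t - s) / 4) ^ 2 * ouKernel γ σ |(s + t) / 2 - x| :=
  ou_kernel_second_difference_general γ σ s t x hst hx'
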